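/- arXiv:math/0406181 — 6 statements merged into one kernel-verified Lean document; each statement's English description precedes it below -/
import Mathlib

section
/- For all real numbers λ > 0, μ ≥ 0 and D ∈ ℝ with μ > 0 or D ≥ 0, one has l(D‖λ,μ) ≥ 0. Moreover l(λ−μ‖λ,μ) = 0, i.e. the cost vanishes at the natural drift D = λ − μ. -/
noncomputable section

/-- The M/M/1 cost `l(D‖λ,μ)` that a suitably normalized `M/M/1` queue with arrival rate
`λ` and service rate `μ` follows the drift `D`.  (Note that Lean's conventions
`Real.log 0 = 0` and `0 * y = 0` implement the convention `0 · log 0 = 0`.) -/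
def mmCost (D lam mu : ℝ) : ℝ :=
  D * Real.log ((D + Real.sqrt (D ^ 2 + 4 * lam * mu)) / (2 * lam))
    + lam + mu - Real.sqrt (D ^ 2 + 4 * lam * mu)

lemma mmCost_key (lam mu x : ℝ) (hlam : 0 < lam) (hmu : 0 ≤ mu) (hx : 0 < x) :
    0 ≤ (lam * x - mu / x) * Real.log x + lam + mu - (lam * x + mu / x) := by
  have h1 : Real.log x ≤ x - 1 := Real.log_le_sub_one_of_pos hx
  have h2 : Real.log (1 / x) ≤ 1 / x - 1 := Real.log_le_sub_one_of_pos (by positivity)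
  rw [Real.log_div one_ne_zero (ne_of_gt hx), Real.log_one] at h2
  -- h2 : 0 - log x ≤ 1/x - 1, so log x + 1/x - 1 ≥ 0
  have hA : 0 ≤ Real.log x + 1 / x - 1 := by linarith
  have hB : 0 ≤ x - 1 - Real.log x := by linarith
  have key : (lam * x - mu / x) * Real.log x + lam + mu - (lam * x + mu / x)
      = lam * x * (Real.log x + 1 / x - 1) + (mu / x) * (x - 1 - Real.log x) := by
    field_simp
    ring
  rw [key]
  have := mul_nonneg (mul_nonneg hlam.le hx.le) hA
  have := mul_nonneg (div_nonneg hmu hx.le) hB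
  linarith

/-- For `λ > 0`, `μ ≥ 0` and `D ∈ ℝ` with `μ > 0` or `D ≥ 0`, one has `l(D‖λ,μ) ≥ 0`;
moreover `l(λ−μ‖λ,μ) = 0`, i.e. the cost vanishes at the natural drift `D = λ − μ`. -/
theorem mmCost_nonneg_and_mmCost_natural_drift_eq_zero
    (lam mu D : ℝ) (hlam : 0 < lam) (hmu : 0 ≤ mu) (h : 0 < mu ∨ 0 ≤ D) :
    0 ≤ mmCost D lam mu ∧ mmCost (lam - mu) lam mu = 0 := by
  constructor
  · set s := Real.sqrt (D ^ 2 + 4 * lam * mu) with hs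
    have hsnn : 0 ≤ s := Real.sqrt_nonneg _
    have hssq : s ^ 2 = D ^ 2 + 4 * lam * mu := by
      rw [hs, Real.sq_sqrt]; positivity
    have habs : |D| ≤ s := by
      rw [hs]
      rw [← Real.sqrt_sq_eq_abs]
      apply Real.sqrt_le_sqrt
      nlinarith
    have hDs : 0 ≤ D + s := by
      have := neg_abs_le D
      linarith
    rcases eq_or_lt_of_le hDs with heq | hpos
    · -- D + s = 0, then s = -D, s² = D², 4λμ = 0, μ = 0, and D ≥ 0 forces D = 0
      have hsD : s = -D := by linarith
      have hmu0 : mu = 0 := by nlinarith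
      have hD0 : D = 0 := by
        rcases h with h | h
        · linarith
        · linarith
      simp only [mmCost, hD0, hmu0]
      simp
      nlinarith [Real.sqrt_nonneg (0 ^ 2 + 4 * lam * 0),
        Real.sq_sqrt (show (0:ℝ) ≤ 0 ^ 2 + 4 * lam * 0 by norm_num)]
    · set x := (D + s) / (2 * lam) with hxdef
      have hx : 0 < x := by positivity
      have hlx : lam * x = (D + s) / 2 := by
        rw [hxdef]; field_simp
      have hmx : mu / x = (s - D) / 2 := by
        rw [hxdef]
        rw [div_div_eq_mul_div, div_eq_div_iff (ne_of_gt hpos) (by norm_num : (2:ℝ) ≠ 0)]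
        nlinarith
      have hD : D = lam * x - mu / x := by rw [hlx, hmx]; ring
      have hS : s = lam * x + mu / x := by rw [hlx, hmx]; ring
      have : mmCost D lam mu
          = (lam * x - mu / x) * Real.log x + lam + mu - (lam * x + mu / x) := by
        rw [mmCost, ← hs, ← hxdef, ← hD, ← hS]
      rw [this]
      exact mmCost_key lam mu x hlam hmu hx
  · have h1 : (lam - mu) ^ 2 + 4 * lam * mu = (lam + mu) ^ 2 := by ring
    have h2 : Real.sqrt ((lam - mu) ^ 2 + 4 * lam * mu) = lam + mu := by
      rw [h1, Real.sqrt_sq (by linarith)]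
    rw [mmCost, h2]
    have : (lam - mu + (lam + mu)) / (2 * lam) = 1 := by
      field_simp; ring
    rw [this, Real.log_one]
    ring
end
end

section
/- Let λ, μ > 0 and D ∈ ℝ. Set a* = (D + √(D² + 4λμ))/2 and b* = (−D + √(D² + 4λμ))/2. Then a* > 0, b* > 0, a* − b* = D, a*·b* = λμ, and I_p(a*‖λ) + I_p(b*‖μ) = l(D‖λ,μ); moreover for every pair of reals a > 0, b > 0 with a − b = D one has I_p(a‖λ) + I_p(b‖μ) ≥ l(D‖λ,μ). Consequently the infimum of I_p(a‖λ) + I_p(b‖μ) over all a, b > 0 with a − b = D equals l(D‖λ,μ). -/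
noncomputable section

/-- The relative entropy `I_p(ν‖λ)` of Poisson processes of intensities `ν` and `λ`.
(Lean's conventions `x / 0 = 0`, `Real.log 0 = 0` and `0 * y = 0` implement the
conventions `0/0 = 0` and `0 · log 0 = 0`.) -/
def poissonEntropy (nu lam : ℝ) : ℝ := nu * Real.log (nu / lam) - nu + lam

lemma log_ge_one_sub_inv {x : ℝ} (hx : 0 < x) : 1 - 1/x ≤ Real.log x := by
  have h := Real.log_le_sub_one_of_pos (x := 1/x) (by positivity)
  rw [one_div, Real.log_inv] at h
  rw [one_div]
  linarith

lemma poissonEntropy_lb (a lam c : ℝ) (ha : 0 < a) (hl : 0 < lam) (hc : 0 < c) :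
    a * Real.log c + lam - c * lam ≤ poissonEntropy a lam := by
  unfold poissonEntropy
  have h1 : Real.log (a / lam) - Real.log c = Real.log (a / (lam * c)) := by
    rw [Real.log_div ha.ne' hl.ne', Real.log_div ha.ne' (by positivity),
      Real.log_mul hl.ne' hc.ne']
    ring
  have h2 : 1 - (lam * c) / a ≤ Real.log (a / (lam * c)) := by
    have := log_ge_one_sub_inv (x := a / (lam * c)) (by positivity)
    rwa [one_div_div] at this
  have h3 : a * (1 - (lam * c) / a) ≤ a * Real.log (a / (lam * c)) :=
    mul_le_mul_of_nonneg_left h2 ha.le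
  have h4 : a * (1 - (lam * c) / a) = a - lam * c := by field_simp
  nlinarith [h3, h4, h1]

/-- Let `λ, μ > 0` and `D ∈ ℝ`.  Set `a* = (D + √(D² + 4λμ))/2` and
`b* = (−D + √(D² + 4λμ))/2`.  Then `a* > 0`, `b* > 0`, `a* − b* = D`, `a*·b* = λμ`,
and `I_p(a*‖λ) + I_p(b*‖μ) = l(D‖λ,μ)`; moreover, for every pair of reals `a, b > 0`
with `a − b = D` one has `I_p(a‖λ) + I_p(b‖μ) ≥ l(D‖λ,μ)`.  Consequently the infimum
of `I_p(a‖λ) + I_p(b‖μ)` over all `a, b > 0` with `a − b = D` equals `l(D‖λ,μ)`. -/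
theorem poissonEntropy_inf_eq_mmCost (lam mu D : ℝ) (hlam : 0 < lam) (hmu : 0 < mu) :
    0 < (D + Real.sqrt (D ^ 2 + 4 * lam * mu)) / 2 ∧
    0 < (-D + Real.sqrt (D ^ 2 + 4 * lam * mu)) / 2 ∧
    (D + Real.sqrt (D ^ 2 + 4 * lam * mu)) / 2
      - (-D + Real.sqrt (D ^ 2 + 4 * lam * mu)) / 2 = D ∧
    (D + Real.sqrt (D ^ 2 + 4 * lam * mu)) / 2
      * ((-D + Real.sqrt (D ^ 2 + 4 * lam * mu)) / 2) = lam * mu ∧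
    poissonEntropy ((D + Real.sqrt (D ^ 2 + 4 * lam * mu)) / 2) lam
      + poissonEntropy ((-D + Real.sqrt (D ^ 2 + 4 * lam * mu)) / 2) mu
      = mmCost D lam mu ∧
    (∀ a b : ℝ, 0 < a → 0 < b → a - b = D →
      mmCost D lam mu ≤ poissonEntropy a lam + poissonEntropy b mu) ∧
    sInf {v : ℝ | ∃ a b : ℝ, 0 < a ∧ 0 < b ∧ a - b = D ∧
      v = poissonEntropy a lam + poissonEntropy b mu} = mmCost D lam mu := by
  set s := Real.sqrt (D ^ 2 + 4 * lam * mu) with hs_def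
  have hs2 : s ^ 2 = D ^ 2 + 4 * lam * mu := Real.sq_sqrt (by positivity)
  have hs0 : 0 ≤ s := Real.sqrt_nonneg _
  have hsD : |D| < s := by
    have : |D| ^ 2 < s ^ 2 := by rw [sq_abs, hs2]; nlinarith
    exact lt_of_pow_lt_pow_left₀ 2 hs0 this
  have habs := abs_lt.mp hsD
  have ha : 0 < (D + s) / 2 := by linarith
  have hb : 0 < (-D + s) / 2 := by linarith
  set a := (D + s) / 2
  set b := (-D + s) / 2
  have hab : a - b = D := by simp [a, b]; ring
  have habm : a * b = lam * mu := by
    have : a * b = (s ^ 2 - D ^ 2) / 4 := by simp [a, b]; ring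
    rw [this, hs2]; ring
  have hbmu : b / mu = lam / a := by
    field_simp
    nlinarith [habm]
  have hlogb : Real.log (b / mu) = - Real.log (a / lam) := by
    rw [hbmu, Real.log_div hlam.ne' ha.ne', Real.log_div ha.ne' hlam.ne']
    ring
  have hal : a / lam = (D + s) / (2 * lam) := by
    show ((D + s) / 2) / lam = (D + s) / (2 * lam)
    rw [div_div]
  have heq : poissonEntropy a lam + poissonEntropy b mu = mmCost D lam mu := by
    unfold poissonEntropy mmCost
    rw [hlogb, ← hal]
    have hab' : a + b = s := by simp [a, b]; ring
    rw [← hs_def]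
    linear_combination Real.log (a / lam) * hab - hab'
  have hlb : ∀ x y : ℝ, 0 < x → 0 < y → x - y = D →
      mmCost D lam mu ≤ poissonEntropy x lam + poissonEntropy y mu := by
    intro x y hx hy hxy
    have h1 := poissonEntropy_lb x lam (a / lam) hx hlam (by positivity)
    have h2 := poissonEntropy_lb y mu (b / mu) hy hmu (by positivity)
    have hc1 : (a / lam) * lam = a := by field_simp
    have hc2 : (b / mu) * mu = b := by field_simp
    rw [hc1] at h1
    rw [hc2, hlogb] at h2
    have hcost : mmCost D lam mu = D * Real.log (a / lam) + lam + mu - s := by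
      unfold mmCost; rw [← hal]
    rw [hcost]
    have hab' : a + b = s := by simp [a, b]; ring
    have hkey : (x - y) * Real.log (a / lam) = D * Real.log (a / lam) := by rw [hxy]
    linarith [h1, h2, hkey, hab']
  refine ⟨ha, hb, hab, habm, heq, hlb, ?_⟩
  apply le_antisymm
  · apply csInf_le
    · exact ⟨mmCost D lam mu, fun v ⟨x, y, hx, hy, hxy, hv⟩ => hv ▸ hlb x y hx hy hxy⟩
    · exact ⟨a, b, ha, hb, hab, heq.symm⟩
  · exact le_csInf ⟨_, a, b, ha, hb, hab, heq.symm⟩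
      (fun v ⟨x, y, hx, hy, hxy, hv⟩ => hv ▸ hlb x y hx hy hxy)
end
end

section
/- For fixed real numbers λ > 0 and μ > 0, the function D ↦ l(D‖λ,μ) is continuous and strictly convex on ℝ. -/
/-!
Differentiating `log (D + √(D² + c))` gives `1 / √(D² + c)`, so in the derivative of
`D ↦ l(D‖λ,μ)` the terms `D / √(D² + 4λμ)` cancel and only `log ((D + √(D² + 4λμ)) / (2λ))`
remains. That derivative is strictly increasing, its own derivative being `1 / √(D² + 4λμ) > 0`.
-/

noncomputable section

open Real

section SqrtSqAdd

variable {c : ℝ}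

lemma abs_lt_sqrt_sq_add (hc : 0 < c) (x : ℝ) : |x| < √(x ^ 2 + c) := by
  rw [← sqrt_sq_eq_abs]
  exact sqrt_lt_sqrt (sq_nonneg x) (by linarith)

lemma sqrt_sq_add_pos (hc : 0 < c) (x : ℝ) : 0 < √(x ^ 2 + c) :=
  sqrt_pos.2 (by positivity)

lemma add_sqrt_sq_add_pos (hc : 0 < c) (x : ℝ) : 0 < x + √(x ^ 2 + c) := by
  linarith [neg_abs_le x, abs_lt_sqrt_sq_add hc x]

lemma hasDerivAt_sqrt_sq_add (hc : 0 < c) (x : ℝ) :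
    HasDerivAt (fun x => √(x ^ 2 + c)) (x / √(x ^ 2 + c)) x := by
  refine (((hasDerivAt_pow 2 x).add_const c).sqrt (by positivity)).congr_deriv ?_
  field_simp
  norm_num

lemma hasDerivAt_log_add_sqrt_sq_add_div (hc : 0 < c) {k : ℝ} (hk : k ≠ 0) (x : ℝ) :
    HasDerivAt (fun x => log ((x + √(x ^ 2 + c)) / k)) (√(x ^ 2 + c))⁻¹ x := by
  have hs := sqrt_sq_add_pos hc x
  have hpos := add_sqrt_sq_add_pos hc x
  refine ((((hasDerivAt_id x).add (hasDerivAt_sqrt_sq_add hc x)).div_const k).log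
    (div_ne_zero hpos.ne' hk)).congr_deriv ?_
  simp only [Pi.add_apply, id]
  field_simp
  ring

lemma strictMono_log_add_sqrt_sq_add_div (hc : 0 < c) {k : ℝ} (hk : k ≠ 0) :
    StrictMono fun x => log ((x + √(x ^ 2 + c)) / k) :=
  strictMono_of_deriv_pos fun x => by
    rw [(hasDerivAt_log_add_sqrt_sq_add_div hc hk x).deriv]
    exact inv_pos.2 (sqrt_sq_add_pos hc x)

end SqrtSqAdd

lemma hasDerivAt_mmCost {lam mu : ℝ} (hlam : 0 < lam) (hmu : 0 < mu) (D : ℝ) :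
    HasDerivAt (fun D => mmCost D lam mu)
      (log ((D + √(D ^ 2 + 4 * lam * mu)) / (2 * lam))) D := by
  have hc : 0 < 4 * lam * mu := by positivity
  have hs := sqrt_sq_add_pos hc D
  refine (((((hasDerivAt_id D).mul (hasDerivAt_log_add_sqrt_sq_add_div hc
    (k := 2 * lam) (by positivity) D)).add_const lam).add_const mu).sub
    (hasDerivAt_sqrt_sq_add hc D)).congr_deriv ?_
  simp only [id]
  field_simp
  ring

/-- For fixed real numbers `λ > 0` and `μ > 0`, the function `D ↦ l(D‖λ,μ)` is
continuous and strictly convex on `ℝ`. -/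
theorem mmCost_continuous_strictConvexOn (lam mu : ℝ) (hlam : 0 < lam) (hmu : 0 < mu) :
    Continuous (fun D => mmCost D lam mu) ∧
    StrictConvexOn ℝ Set.univ (fun D => mmCost D lam mu) := by
  have hderiv := hasDerivAt_mmCost hlam hmu
  have hcont : Continuous fun D => mmCost D lam mu :=
    continuous_iff_continuousAt.2 fun D => (hderiv D).continuousAt
  refine ⟨hcont, StrictMono.strictConvexOn_univ_of_deriv hcont ?_⟩
  rw [show deriv (fun D => mmCost D lam mu) = _ from funext fun D => (hderiv D).deriv]
  exact strictMono_log_add_sqrt_sq_add_div (by positivity) (by positivity)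
end
end

section
/- There exists a real number M such that for every x ∈ ℝ₊^R and every D ∈ ℝ^R with D_ij = 0 for all ij ∈ Λ₂(x), D_ij ≥ 0 for all ij ∈ Λ₁(x), and ‖D‖ ≥ M, one has L(x,D) ≥ ½‖D‖·log‖D‖, where ‖D‖ = Σ_{ij ∈ R} |D_ij|. -/
open Classical Filter MeasureTheory
open scoped ENNReal

noncomputable section

/-- A star network: a finite set `S` of channels with capacities `C i > 0`, and a set `R`
of routes, each route `r` being an unordered pair of distinct channels
`{fst r, snd r}`, with arrival rates `lam r > 0` and service parameters `mu r > 0`. -/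
structure StarNetwork (S R : Type*) where
  /-- one endpoint of a route -/
  fst : R → S
  /-- the other endpoint of a route -/
  snd : R → S
  fst_ne_snd : ∀ r, fst r ≠ snd r
  /-- the capacity of each channel -/
  C : S → ℝ
  C_pos : ∀ i, 0 < C i
  /-- the arrival rate on each route -/
  lam : R → ℝ
  lam_pos : ∀ r, 0 < lam r
  /-- the service parameter of each route -/
  mu : R → ℝ
  mu_pos : ∀ r, 0 < mu r

namespace StarNetwork

variable {S R : Type*} [Fintype S] [Fintype R]

/-- `N.touches i r` means that channel `i` is one of the two endpoints of route `r`. -/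
def touches (N : StarNetwork S R) (i : S) (r : R) : Prop :=
  N.fst r = i ∨ N.snd r = i

/-- The load `x_i = ∑_{j : ij ∈ R} x_ij` of channel `i`. -/
def load (N : StarNetwork S R) (x : R → ℝ) (i : S) : ℝ :=
  ∑ r : R, if N.touches i r then x r else 0

/-- The service rate `μ_ij(x) = μ_ij · x_ij · min (C_i / x_i) (C_j / x_j)` if `x_ij > 0`,
and `μ_ij(x) = 0` if `x_ij = 0`. -/
def srv (N : StarNetwork S R) (x : R → ℝ) (r : R) : ℝ :=
  if 0 < x r then
    N.mu r * x r *
      min (N.C (N.fst r) / N.load x (N.fst r)) (N.C (N.snd r) / N.load x (N.snd r))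
  else 0

/-- The face `Λ(x) = {ij ∈ R : x_ij > 0}` of saturated routes. -/
def face (N : StarNetwork S R) (x : R → ℝ) : Set R := {r | 0 < x r}

/-- The jammed routes `Λ₁(x)`: routes `ij` with `x_ij = 0` such that some route of
`Λ(x)` contains `i` or contains `j`. -/
def jammed (N : StarNetwork S R) (x : R → ℝ) : Set R :=
  {r | x r = 0 ∧ ∃ r' ∈ N.face x, N.touches (N.fst r) r' ∨ N.touches (N.snd r) r'}

/-- The ergodic routes `Λ₂(x) = R \ (Λ(x) ∪ Λ₁(x))`. -/
def ergodicRoutes (N : StarNetwork S R) (x : R → ℝ) : Set R :=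
  (N.face x ∪ N.jammed x)ᶜ

/-- The local rate function `L(x, D) = ∑_{ij ∈ Λ(x) ∪ Λ₁(x)} l(D_ij ‖ λ_ij, μ_ij(x))`
(its finite part; `L(x,D) = +∞` when `D_ij < 0` for some `ij ∉ Λ(x)`). -/
def locRate (N : StarNetwork S R) (x D : R → ℝ) : ℝ :=
  ∑ r : R, if r ∈ N.face x ∪ N.jammed x then mmCost (D r) (N.lam r) (N.srv x r) else 0

/-- The sample path rate function `I_T(φ) = ∫₀ᵀ L(φ(t), φ̇(t)) dt ∈ [0,∞]` if `φ` is
absolutely continuous on `[0,T]`, and `I_T(φ) = +∞` otherwise (the infimum over an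
empty family is `⊤`; any two densities of `φ` coincide a.e. on `[0,T]`, so the
infimum is the common value of the integral). -/
def pathRate (N : StarNetwork S R) (T : ℝ) (φ : ℝ → R → ℝ) : ℝ≥0∞ :=
  ⨅ (f : ℝ → R → ℝ) (_ : IntegrableOn f (Set.Icc 0 T))
    (_ : ∀ t ∈ Set.Icc (0 : ℝ) T, φ t = φ 0 + ∫ s in (0 : ℝ)..t, f s),
    ∫⁻ t in Set.Ioc (0 : ℝ) T, ENNReal.ofReal (N.locRate (φ t) (f t))

end StarNetwork

/-!
Each term of `L(x, D)` grows like `|D| log |D| - c |D|`, with a constant `c` that is uniform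
in `x` because the service rates `μ_ij(x) ≤ μ_ij C_i` are bounded; where `μ_ij(x) = 0` this
needs `D_ij ≥ 0`. Summing over the routes, the elementary bound `∑ t log t ≥ T log T - |R| T`
for `T = ∑ t` gives `L(x, D) ≥ ‖D‖ log ‖D‖ - K ‖D‖`, which exceeds `½ ‖D‖ log ‖D‖` once
`log ‖D‖ ≥ 2K`.
-/

open Real

lemma mul_log_sub_le_mul_log {t T : ℝ} (ht : 0 ≤ t) (hT : 0 < T) :
    t * log T - T ≤ t * log t := by
  rcases ht.eq_or_lt with rfl | ht
  · simp [hT.le]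
  · have h := one_sub_inv_le_log_of_pos (div_pos ht hT)
    rw [inv_div, log_div ht.ne' hT.ne'] at h
    have h' := mul_le_mul_of_nonneg_left h ht.le
    rw [mul_sub, mul_one, mul_div_cancel₀ _ ht.ne'] at h'
    linarith

lemma sum_mul_log_sum_sub_le {ι : Type*} [Fintype ι] {t : ι → ℝ} (ht : ∀ i, 0 ≤ t i)
    (hT : 0 < ∑ i, t i) :
    (∑ i, t i) * log (∑ i, t i) - Fintype.card ι * ∑ i, t i ≤ ∑ i, t i * log (t i) :=
  calc (∑ i, t i) * log (∑ i, t i) - Fintype.card ι * ∑ i, t i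
      = ∑ i, (t i * log (∑ j, t j) - ∑ j, t j) := by
        rw [Finset.sum_sub_distrib, ← Finset.sum_mul, Finset.sum_const, Finset.card_univ,
          nsmul_eq_mul]
    _ ≤ ∑ i, t i * log (t i) := Finset.sum_le_sum fun i _ => mul_log_sub_le_mul_log (ht i) hT

lemma sqrt_sq_add_four_mul_le {D lam mu : ℝ} (hl : 0 ≤ lam) (hm : 0 ≤ mu) :
    √(D ^ 2 + 4 * lam * mu) ≤ |D| + lam + mu := by
  rw [sqrt_le_left (by positivity)]
  nlinarith [sq_abs D, abs_nonneg D, sq_nonneg (lam - mu)]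

lemma abs_le_sqrt_sq_add_four_mul {D lam mu : ℝ} (hl : 0 ≤ lam) (hm : 0 ≤ mu) :
    |D| ≤ √(D ^ 2 + 4 * lam * mu) :=
  abs_le_sqrt (by nlinarith [mul_nonneg hl hm])

lemma mul_log_sub_le_mul_log_mmArg_of_nonneg {D lam mu : ℝ} (hl : 0 < lam) (hm : 0 ≤ mu)
    (hD : 0 ≤ D) :
    D * log D - D * log lam ≤ D * log ((D + √(D ^ 2 + 4 * lam * mu)) / (2 * lam)) := by
  rcases hD.eq_or_lt with rfl | hD
  · simp
  have hs := (le_abs_self D).trans (abs_le_sqrt_sq_add_four_mul (D := D) hl.le hm)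
  rw [← mul_sub, ← log_div hD.ne' hl.ne']
  refine mul_le_mul_of_nonneg_left (log_le_log (by positivity) ?_) hD.le
  rw [div_le_div_iff₀ hl (by positivity)]
  nlinarith

lemma abs_mul_log_sub_le_mul_log_mmArg_of_neg {D lam mu : ℝ} (hl : 0 < lam) (hm : 0 < mu)
    (hD : D < 0) :
    |D| * log |D| - |D| * log mu ≤ D * log ((D + √(D ^ 2 + 4 * lam * mu)) / (2 * lam)) := by
  set s := √(D ^ 2 + 4 * lam * mu)
  have hs : -D ≤ s := (neg_le_abs D).trans (abs_le_sqrt_sq_add_four_mul hl.le hm.le)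
  have hs2 : s ^ 2 = D ^ 2 + 4 * lam * mu := sq_sqrt (by positivity)
  have hDs : 0 < D + s := by nlinarith [mul_pos hl hm]
  -- `(D + s) (s - D) = 4 λ μ` and `s - D ≥ -2 D`
  have harg : (D + s) / (2 * lam) ≤ mu / -D := by
    rw [div_le_div_iff₀ (by positivity) (by linarith)]
    nlinarith
  have hlog := log_le_log (by positivity) harg
  rw [log_div hm.ne' (by linarith), abs_of_neg hD] at *
  nlinarith

lemma abs_mul_log_sub_le_mmCost {D lam mu : ℝ} (hl : 0 < lam) (hm : 0 ≤ mu)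
    (h : 0 ≤ D ∨ 0 < mu) :
    |D| * log |D| - (1 + log⁺ lam + log⁺ mu) * |D| ≤ mmCost D lam mu := by
  have hs := sqrt_sq_add_four_mul_le (D := D) hl.le hm
  have hlam : log lam ≤ log⁺ lam := le_max_right _ _
  have hmu : log mu ≤ log⁺ mu := le_max_right _ _
  have hlam0 : 0 ≤ log⁺ lam := posLog_nonneg
  have hmu0 : 0 ≤ log⁺ mu := posLog_nonneg
  have hD0 := abs_nonneg D
  unfold mmCost
  rcases le_or_gt 0 D with hD | hD
  · have hlog := mul_log_sub_le_mul_log_mmArg_of_nonneg (mu := mu) hl hm hD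
    rw [abs_of_nonneg hD] at *
    nlinarith [mul_le_mul_of_nonneg_left hlam hD, mul_nonneg hmu0 hD]
  · have hlog := abs_mul_log_sub_le_mul_log_mmArg_of_neg hl (h.resolve_left hD.not_ge) hD
    nlinarith [mul_le_mul_of_nonneg_left hmu hD0, mul_nonneg hlam0 hD0]

namespace StarNetwork

variable {S R : Type*} (N : StarNetwork S R)

def costSlope (r : R) : ℝ := 1 + log⁺ (N.lam r) + log⁺ (N.mu r * N.C (N.fst r))

lemma costSlope_nonneg (r : R) : 0 ≤ N.costSlope r := by
  have : 0 ≤ log⁺ (N.lam r) := posLog_nonneg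
  have : 0 ≤ log⁺ (N.mu r * N.C (N.fst r)) := posLog_nonneg
  unfold costSlope
  linarith

variable [Fintype R] {x : R → ℝ}

lemma le_load (hx : ∀ r, 0 ≤ x r) {i : S} {r : R} (hr : N.touches i r) :
    x r ≤ N.load x i := by
  have := Finset.single_le_sum (f := fun r' => if N.touches i r' then x r' else 0)
    (fun r' _ => by split_ifs <;> simp [hx r']) (Finset.mem_univ r)
  simpa [load, hr] using this

lemma srv_pos (hx : ∀ r, 0 ≤ x r) {r : R} (hr : 0 < x r) : 0 < N.srv x r := by
  have h₁ := hr.trans_le (N.le_load hx (Or.inl rfl : N.touches (N.fst r) r))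
  have h₂ := hr.trans_le (N.le_load hx (Or.inr rfl : N.touches (N.snd r) r))
  rw [srv, if_pos hr]
  exact mul_pos (mul_pos (N.mu_pos r) hr)
    (lt_min (div_pos (N.C_pos _) h₁) (div_pos (N.C_pos _) h₂))

lemma srv_nonneg (hx : ∀ r, 0 ≤ x r) (r : R) : 0 ≤ N.srv x r := by
  by_cases hr : 0 < x r
  · exact (N.srv_pos hx hr).le
  · simp [srv, hr]

lemma srv_le (hx : ∀ r, 0 ≤ x r) (r : R) : N.srv x r ≤ N.mu r * N.C (N.fst r) := by
  have hμC : 0 ≤ N.mu r * N.C (N.fst r) := mul_nonneg (N.mu_pos r).le (N.C_pos _).le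
  rw [srv]
  split_ifs with hr
  · have hle := N.le_load hx (Or.inl rfl : N.touches (N.fst r) r)
    calc N.mu r * x r * min _ _
        ≤ N.mu r * x r * (N.C (N.fst r) / N.load x (N.fst r)) :=
          mul_le_mul_of_nonneg_left (min_le_left _ _) (mul_pos (N.mu_pos r) hr).le
      _ = N.mu r * N.C (N.fst r) * (x r / N.load x (N.fst r)) := by ring
      _ ≤ N.mu r * N.C (N.fst r) :=
          mul_le_of_le_one_right hμC (div_le_one_of_le₀ hle (hx r |>.trans hle))
  · exact hμC

variable {D : R → ℝ}

lemma sum_abs_mul_log_abs_sub_le_locRate (hx : ∀ r, 0 ≤ x r)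
    (hD₂ : ∀ r ∈ N.ergodicRoutes x, D r = 0) (hD₁ : ∀ r ∈ N.jammed x, 0 ≤ D r) :
    ∑ r, (|D r| * log |D r| - N.costSlope r * |D r|) ≤ N.locRate x D := by
  refine Finset.sum_le_sum fun r _ => ?_
  split_ifs with hr
  · have hsrv : 0 ≤ D r ∨ 0 < N.srv x r :=
      hr.elim (fun hf => Or.inr (N.srv_pos hx hf)) (fun hj => Or.inl (hD₁ r hj))
    refine le_trans ?_ (abs_mul_log_sub_le_mmCost (N.lam_pos r) (N.srv_nonneg hx r) hsrv)
    unfold costSlope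
    gcongr
    exacts [N.srv_nonneg hx r, N.srv_le hx r]
  · simp [hD₂ r hr]

lemma total_mul_log_sub_le_locRate (hx : ∀ r, 0 ≤ x r)
    (hD₂ : ∀ r ∈ N.ergodicRoutes x, D r = 0) (hD₁ : ∀ r ∈ N.jammed x, 0 ≤ D r)
    (hD : 0 < ∑ r, |D r|) :
    (∑ r, |D r|) * log (∑ r, |D r|) - (Fintype.card R + ∑ r, N.costSlope r) * ∑ r, |D r|
      ≤ N.locRate x D := by
  have hslope : ∑ r, N.costSlope r * |D r| ≤ (∑ r, N.costSlope r) * ∑ r, |D r| := by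
    rw [Finset.mul_sum]
    exact Finset.sum_le_sum fun r _ => mul_le_mul_of_nonneg_right
      (Finset.single_le_sum (fun r' _ => N.costSlope_nonneg r') (Finset.mem_univ r))
      (abs_nonneg _)
  have hent := sum_mul_log_sum_sub_le (fun r => abs_nonneg (D r)) hD
  have hloc := N.sum_abs_mul_log_abs_sub_le_locRate hx hD₂ hD₁
  rw [Finset.sum_sub_distrib] at hloc
  linarith

end StarNetwork

theorem locRate_superlinear_general {S R : Type*} [Fintype R]
    (N : StarNetwork S R) :
    ∃ M : ℝ, ∀ x D : R → ℝ, (∀ r, 0 ≤ x r) →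
      (∀ r ∈ N.ergodicRoutes x, D r = 0) → (∀ r ∈ N.jammed x, 0 ≤ D r) →
      M ≤ ∑ r : R, |D r| →
      (∑ r : R, |D r|) / 2 * Real.log (∑ r : R, |D r|) ≤ N.locRate x D := by
  set K := (Fintype.card R : ℝ) + ∑ r, N.costSlope r
  refine ⟨exp (2 * K), fun x D hx hD₂ hD₁ hM => ?_⟩
  set T := ∑ r : R, |D r|
  have hT : 0 < T := (exp_pos _).trans_le hM
  have hlogT : 2 * K ≤ log T := (le_log_iff_exp_le hT).2 hM
  have hloc := N.total_mul_log_sub_le_locRate hx hD₂ hD₁ hT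
  nlinarith [mul_le_mul_of_nonneg_left hlogT hT.le]

/-- There exists `M ∈ ℝ` such that for every `x ∈ ℝ₊^R` and every `D ∈ ℝ^R` with
`D_ij = 0` for all `ij ∈ Λ₂(x)`, `D_ij ≥ 0` for all `ij ∈ Λ₁(x)`, and `‖D‖ ≥ M`, one has
`L(x,D) ≥ ½‖D‖·log‖D‖`, where `‖D‖ = ∑_{ij ∈ R} |D_ij|`. -/
theorem locRate_superlinear {S R : Type*} [Fintype S] [Fintype R]
    (N : StarNetwork S R) :
    ∃ M : ℝ, ∀ x D : R → ℝ, (∀ r, 0 ≤ x r) →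
      (∀ r ∈ N.ergodicRoutes x, D r = 0) → (∀ r ∈ N.jammed x, 0 ≤ D r) →
      M ≤ ∑ r : R, |D r| →
      (∑ r : R, |D r|) / 2 * Real.log (∑ r : R, |D r|) ≤ N.locRate x D :=
  locRate_superlinear_general N
end
end

section
/- For every x ∈ ℝ₊^R and every route ij ∈ Λ(x) ∪ Λ₁(x), the service-rate function y ↦ μ_ij(y) is continuous at x; in particular, if x⁽ⁿ⁾ → x in ℝ₊^R then μ_ij(x⁽ⁿ⁾) → μ_ij(x) for all ij ∈ Λ(x) ∪ Λ₁(x). -/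
open Classical Filter MeasureTheory
open scoped ENNReal

noncomputable section

private lemma load_cont {S R : Type*} [Fintype S] [Fintype R] (N : StarNetwork S R) (i : S) :
    Continuous (fun y : R → ℝ => N.load y i) := by
  unfold StarNetwork.load
  refine continuous_finset_sum _ (fun r _ => ?_)
  by_cases h : N.touches i r <;> simp only [h, if_true, if_false]
  · exact continuous_apply r
  · exact continuous_const

private lemma le_load {S R : Type*} [Fintype S] [Fintype R] (N : StarNetwork S R)
    {y : R → ℝ} (hy : ∀ r, 0 ≤ y r) {i : S} {r : R} (h : N.touches i r) :
    y r ≤ N.load y i := by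
  unfold StarNetwork.load
  have := Finset.single_le_sum (f := fun r' => if N.touches i r' then y r' else 0)
    (fun r' _ => by by_cases h' : N.touches i r' <;> simp [h', hy r']) (Finset.mem_univ r)
  simpa [h] using this

/-- For every `x ∈ ℝ₊^R` and every route `ij ∈ Λ(x) ∪ Λ₁(x)`, the service-rate function
`y ↦ μ_ij(y)` is continuous at `x` (within `ℝ₊^R`); in particular, if `x⁽ⁿ⁾ → x` in
`ℝ₊^R` then `μ_ij(x⁽ⁿ⁾) → μ_ij(x)` for all `ij ∈ Λ(x) ∪ Λ₁(x)`. -/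
theorem srv_continuousWithinAt {S R : Type*} [Fintype S] [Fintype R]
    (N : StarNetwork S R) (x : R → ℝ) (hx : ∀ r, 0 ≤ x r)
    (r : R) (hr : r ∈ N.face x ∪ N.jammed x) :
    ContinuousWithinAt (fun y => N.srv y r) {y : R → ℝ | ∀ r', 0 ≤ y r'} x ∧
    ∀ xs : ℕ → R → ℝ, (∀ n r', 0 ≤ xs n r') → Tendsto xs atTop (nhds x) →
      Tendsto (fun n => N.srv (xs n) r) atTop (nhds (N.srv x r)) := by
  set s : Set (R → ℝ) := {y : R → ℝ | ∀ r', 0 ≤ y r'} with hs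
  have key : ContinuousWithinAt (fun y => N.srv y r) s x := by
    rcases hr with hr | hr
    · -- face case : x r > 0
      have hxr : 0 < x r := hr
      have h1 : 0 < N.load x (N.fst r) :=
        lt_of_lt_of_le hxr (le_load N hx (Or.inl rfl))
      have h2 : 0 < N.load x (N.snd r) :=
        lt_of_lt_of_le hxr (le_load N hx (Or.inr rfl))
      set g : (R → ℝ) → ℝ := fun y => N.mu r * y r *
        min (N.C (N.fst r) / N.load y (N.fst r)) (N.C (N.snd r) / N.load y (N.snd r))
      have hg : ContinuousAt g x := by
        have c1 : ContinuousAt (fun y : R → ℝ => N.C (N.fst r) / N.load y (N.fst r)) x :=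
          continuousAt_const.div (load_cont N (N.fst r)).continuousAt h1.ne'
        have c2 : ContinuousAt (fun y : R → ℝ => N.C (N.snd r) / N.load y (N.snd r)) x :=
          continuousAt_const.div (load_cont N (N.snd r)).continuousAt h2.ne'
        exact (continuousAt_const.mul (continuous_apply r).continuousAt).mul (c1.min c2)
      have heq : (fun y => N.srv y r) =ᶠ[nhds x] g := by
        have hmem : {y : R → ℝ | 0 < y r} ∈ nhds x :=
          (isOpen_lt continuous_const (continuous_apply r)).mem_nhds hxr
        filter_upwards [hmem] with y hy
        simp only [StarNetwork.srv, if_pos hy, g]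
      exact (hg.congr heq.symm).continuousWithinAt
    · -- jammed case : x r = 0 and some load positive
      obtain ⟨hx0, r', hr', htch⟩ := hr
      have hxr' : 0 < x r' := hr'
      obtain ⟨i, hi, hli⟩ : ∃ i, (i = N.fst r ∨ i = N.snd r) ∧ 0 < N.load x i := by
        rcases htch with h | h
        · exact ⟨N.fst r, Or.inl rfl, lt_of_lt_of_le hxr' (le_load N hx h)⟩
        · exact ⟨N.snd r, Or.inr rfl, lt_of_lt_of_le hxr' (le_load N hx h)⟩
      have hsx : N.srv x r = 0 := by
        simp [StarNetwork.srv, hx0]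
      rw [ContinuousWithinAt, hsx]
      set h : (R → ℝ) → ℝ := fun y => N.mu r * y r * (N.C i / N.load y i) with hh
      have hht : Tendsto h (nhdsWithin x s) (nhds 0) := by
        have hcont : ContinuousAt h x :=
          (continuousAt_const.mul (continuous_apply r).continuousAt).mul
            (continuousAt_const.div (load_cont N i).continuousAt hli.ne')
        have : h x = 0 := by simp [hh, hx0]
        exact this ▸ hcont.continuousWithinAt
      have hmemload : ∀ᶠ y in nhdsWithin x s, 0 < N.load y i :=
        mem_nhdsWithin_of_mem_nhds
          ((isOpen_lt continuous_const (load_cont N i)).mem_nhds hli)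
      have hmems : ∀ᶠ y in nhdsWithin x s, y ∈ s := eventually_mem_nhdsWithin
      refine tendsto_of_tendsto_of_tendsto_of_le_of_le' tendsto_const_nhds hht ?_ ?_
      · -- 0 ≤ srv y r
        filter_upwards [hmems] with y hy
        unfold StarNetwork.srv
        split
        · rename_i hyr
          have l1 : 0 < N.load y (N.fst r) := lt_of_lt_of_le hyr (le_load N hy (Or.inl rfl))
          have l2 : 0 < N.load y (N.snd r) := lt_of_lt_of_le hyr (le_load N hy (Or.inr rfl))
          have : (0:ℝ) ≤ min (N.C (N.fst r) / N.load y (N.fst r))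
              (N.C (N.snd r) / N.load y (N.snd r)) :=
            le_min (div_nonneg (N.C_pos _).le l1.le) (div_nonneg (N.C_pos _).le l2.le)
          exact mul_nonneg (mul_nonneg (N.mu_pos r).le hyr.le) this
        · exact le_refl 0
      · -- srv y r ≤ h y
        filter_upwards [hmems, hmemload] with y hy hload
        unfold StarNetwork.srv
        split
        · rename_i hyr
          have hmin : min (N.C (N.fst r) / N.load y (N.fst r))
              (N.C (N.snd r) / N.load y (N.snd r)) ≤ N.C i / N.load y i := by
            rcases hi with rfl | rfl
            · exact min_le_left _ _
            · exact min_le_right _ _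
          exact mul_le_mul_of_nonneg_left hmin
            (mul_nonneg (N.mu_pos r).le hyr.le)
        · rename_i hyr
          have hy0 : y r = 0 := le_antisymm (not_lt.mp hyr) (hy r)
          simp [hh, hy0]
  refine ⟨key, fun xs hxs hlim => ?_⟩
  exact key.tendsto.comp
    (tendsto_nhdsWithin_of_tendsto_nhds_of_eventually_within _ hlim
      (Filter.Eventually.of_forall (fun n => hxs n)))
end
end

section
/- Fix x ∈ ℝ₊^R and D ∈ ℝ^R with D_ij = 0 for all ij ∉ Λ(x). Then the infimum, over all families (a_ij)_{ij ∈ Λ(x) ∪ Λ₁(x)} with a_ij = 0 for ij ∈ Λ₁(x) and a_ij > 0, a_ij − D_ij > 0 for ij ∈ Λ(x), of the relative entropy Σ_{ij ∈ Λ(x) ∪ Λ₁(x)} [ I_p(a_ij‖λ_ij) + I_p(a_ij − D_ij‖μ_ij(x)) ], equals Σ_{ij ∈ Λ(x)} l(D_ij‖λ_ij, μ_ij(x)) + Σ_{ij ∈ Λ₁(x)} λ_ij, which is the explicit representation of the local rate function L(x,D). -/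
open Classical Filter MeasureTheory
open scoped ENNReal

noncomputable section

private lemma key_log {t s : ℝ} (ht : 0 < t) (hs : 0 < s) :
    t - s ≤ t * Real.log (t / s) := by
  have h := Real.log_le_sub_one_of_pos (div_pos hs ht)
  have h2 : Real.log (s / t) = - Real.log (t / s) := by
    rw [← Real.log_inv, inv_div]
  rw [h2] at h
  have h3 := mul_le_mul_of_nonneg_left h ht.le
  have h4 : t * (s / t) = s := mul_div_cancel₀ s ht.ne'
  nlinarith

private lemma sqrt_facts {lam mu D : ℝ} (hl : 0 < lam) (hm : 0 < mu) :
    D < Real.sqrt (D ^ 2 + 4 * lam * mu) ∧ -Real.sqrt (D ^ 2 + 4 * lam * mu) < D := by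
  set s := Real.sqrt (D ^ 2 + 4 * lam * mu) with hs
  have hs0 : 0 ≤ s := Real.sqrt_nonneg _
  have hs2 : s ^ 2 = D ^ 2 + 4 * lam * mu := Real.sq_sqrt (by nlinarith)
  constructor <;> nlinarith

private lemma mm_log (lam mu D : ℝ) :
    mmCost D lam mu
      = D * Real.log (((D + Real.sqrt (D ^ 2 + 4 * lam * mu)) / 2) / lam)
        + lam + mu - Real.sqrt (D ^ 2 + 4 * lam * mu) := by
  rw [mmCost, div_div, mul_comm (2:ℝ) lam]

private lemma logb_eq {lam mu D : ℝ} (hl : 0 < lam) (hm : 0 < mu) :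
    Real.log (((Real.sqrt (D ^ 2 + 4 * lam * mu) - D) / 2) / mu)
      = - Real.log (((D + Real.sqrt (D ^ 2 + 4 * lam * mu)) / 2) / lam) := by
  obtain ⟨h1, h2⟩ := sqrt_facts hl hm
  set s := Real.sqrt (D ^ 2 + 4 * lam * mu) with hs
  have hs2 : s ^ 2 = D ^ 2 + 4 * lam * mu := Real.sq_sqrt (by nlinarith)
  have hmul : ((s - D) / 2 / mu) * ((D + s) / 2 / lam) = 1 := by
    field_simp
    nlinarith
  rw [eq_inv_of_mul_eq_one_left hmul, Real.log_inv]

private lemma poisson_ge_mmCost {lam mu D a : ℝ} (hl : 0 < lam) (hm : 0 < mu)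
    (ha : 0 < a) (hb : 0 < a - D) :
    mmCost D lam mu ≤ poissonEntropy a lam + poissonEntropy (a - D) mu := by
  obtain ⟨h1, h2⟩ := sqrt_facts hl hm
  rw [mm_log, poissonEntropy, poissonEntropy]
  set s := Real.sqrt (D ^ 2 + 4 * lam * mu) with hs
  have hs2 : s ^ 2 = D ^ 2 + 4 * lam * mu := Real.sq_sqrt (by nlinarith)
  have hApos : 0 < (D + s) / 2 := by linarith
  have hBpos : 0 < (s - D) / 2 := by linarith
  have t1 : a - (D + s) / 2 ≤ a * Real.log (a / ((D + s) / 2)) := key_log ha hApos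
  have t2 : (a - D) - (s - D) / 2 ≤ (a - D) * Real.log ((a - D) / ((s - D) / 2)) :=
    key_log hb hBpos
  have e1 : Real.log (a / lam)
      = Real.log (a / ((D + s) / 2)) + Real.log ((D + s) / 2 / lam) := by
    rw [← Real.log_mul (by positivity) (by positivity), div_mul_div_comm,
      mul_comm a ((D + s) / 2), mul_div_mul_left _ _ hApos.ne']
  have e2 : Real.log ((a - D) / mu)
      = Real.log ((a - D) / ((s - D) / 2)) + Real.log ((s - D) / 2 / mu) := by
    rw [← Real.log_mul (by positivity) (by positivity), div_mul_div_comm,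
      mul_comm (a - D) ((s - D) / 2), mul_div_mul_left _ _ hBpos.ne']
  have e3 : Real.log ((s - D) / 2 / mu) = - Real.log ((D + s) / 2 / lam) :=
    logb_eq hl hm
  rw [e1, e2, e3]
  set La := Real.log ((D + s) / 2 / lam) with hLa
  set L1 := Real.log (a / ((D + s) / 2)) with hL1
  set L2 := Real.log ((a - D) / ((s - D) / 2)) with hL2
  have hDL : a * (L1 + La) = a * L1 + a * La := by ring
  have hDL2 : (a - D) * (L2 + -La) = (a - D) * L2 - (a - D) * La := by ring
  rw [hDL, hDL2]
  nlinarith [t1, t2]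

private lemma poisson_eq_mmCost {lam mu D : ℝ} (hl : 0 < lam) (hm : 0 < mu) :
    0 < (D + Real.sqrt (D ^ 2 + 4 * lam * mu)) / 2 ∧
    0 < (D + Real.sqrt (D ^ 2 + 4 * lam * mu)) / 2 - D ∧
    poissonEntropy ((D + Real.sqrt (D ^ 2 + 4 * lam * mu)) / 2) lam
      + poissonEntropy ((D + Real.sqrt (D ^ 2 + 4 * lam * mu)) / 2 - D) mu
      = mmCost D lam mu := by
  obtain ⟨h1, h2⟩ := sqrt_facts (D := D) hl hm
  refine ⟨by linarith, by linarith, ?_⟩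
  have hsub : (D + Real.sqrt (D ^ 2 + 4 * lam * mu)) / 2 - D
      = (Real.sqrt (D ^ 2 + 4 * lam * mu) - D) / 2 := by ring
  rw [hsub, mm_log, poissonEntropy, poissonEntropy, logb_eq hl hm]
  ring

private lemma srv_pos {S R : Type*} [Fintype S] [Fintype R]
    (N : StarNetwork S R) (x : R → ℝ) (hx : ∀ r, 0 ≤ x r) {r : R}
    (hr : r ∈ N.face x) : 0 < N.srv x r := by
  have hxr : 0 < x r := hr
  have hload : ∀ i, N.touches i r → 0 < N.load x i := by
    intro i hi
    have h1 : (if N.touches i r then x r else 0) ≤ N.load x i := by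
      apply Finset.single_le_sum (f := fun r' => if N.touches i r' then x r' else 0)
        (fun r' _ => by by_cases h : N.touches i r' <;> simp [h, hx r']) (Finset.mem_univ r)
    rw [if_pos hi] at h1
    linarith
  have h1 := hload (N.fst r) (Or.inl rfl)
  have h2 := hload (N.snd r) (Or.inr rfl)
  rw [StarNetwork.srv, if_pos hxr]
  have := N.mu_pos r
  have := N.C_pos (N.fst r)
  have := N.C_pos (N.snd r)
  positivity

private lemma srv_jammed {S R : Type*} [Fintype S] [Fintype R]
    (N : StarNetwork S R) (x : R → ℝ) {r : R} (hr : x r = 0) : N.srv x r = 0 := by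
  rw [StarNetwork.srv, if_neg]
  rw [hr]
  exact lt_irrefl 0

private lemma mmCost_zero (lam : ℝ) : mmCost 0 lam 0 = lam := by
  have h : (0 : ℝ) ^ 2 + 4 * lam * 0 = 0 := by ring
  rw [mmCost, h, Real.sqrt_zero]
  simp

/-- Fix `x ∈ ℝ₊^R` and `D ∈ ℝ^R` with `D_ij = 0` for all `ij ∉ Λ(x)`.  Then the infimum,
over all families `(a_ij)` with `a_ij = 0` for `ij ∈ Λ₁(x)` and `a_ij > 0`,
`a_ij − D_ij > 0` for `ij ∈ Λ(x)`, of the relative entropy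
`∑_{ij ∈ Λ(x) ∪ Λ₁(x)} [I_p(a_ij‖λ_ij) + I_p(a_ij − D_ij‖μ_ij(x))]`, equals
`∑_{ij ∈ Λ(x)} l(D_ij‖λ_ij, μ_ij(x)) + ∑_{ij ∈ Λ₁(x)} λ_ij`, which is the explicit
representation of the local rate function `L(x,D)`. -/
theorem entropy_inf_eq_locRate {S R : Type*} [Fintype S] [Fintype R]
    (N : StarNetwork S R) (x D : R → ℝ) (hx : ∀ r, 0 ≤ x r)
    (hD : ∀ r ∉ N.face x, D r = 0) :
    sInf {v : ℝ | ∃ a : R → ℝ,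
        (∀ r ∈ N.jammed x, a r = 0) ∧
        (∀ r ∈ N.face x, 0 < a r ∧ 0 < a r - D r) ∧
        v = ∑ r : R, if r ∈ N.face x ∪ N.jammed x then
            poissonEntropy (a r) (N.lam r) + poissonEntropy (a r - D r) (N.srv x r)
          else 0}
      = (∑ r : R, if r ∈ N.face x then mmCost (D r) (N.lam r) (N.srv x r) else 0)
        + (∑ r : R, if r ∈ N.jammed x then N.lam r else 0) ∧
    (∑ r : R, if r ∈ N.face x then mmCost (D r) (N.lam r) (N.srv x r) else 0)
        + (∑ r : R, if r ∈ N.jammed x then N.lam r else 0) = N.locRate x D := by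
  classical
  have hFJ : ∀ r ∈ N.face x, r ∉ N.jammed x := by
    intro r hF hJ
    exact absurd hJ.1 (ne_of_gt (hF : 0 < x r))
  have hJF : ∀ r ∈ N.jammed x, r ∉ N.face x := by
    intro r hJ hF
    exact absurd hJ.1 (ne_of_gt (hF : 0 < x r))
  -- the per-route terms on jammed routes
  have hjam : ∀ r ∈ N.jammed x, D r = 0 ∧ N.srv x r = 0 := by
    intro r hJ
    exact ⟨hD r (hJF r hJ), srv_jammed N x hJ.1⟩
  -- pointwise split of the RHS
  have hsplit : (∑ r : R, if r ∈ N.face x then mmCost (D r) (N.lam r) (N.srv x r) else 0)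
        + (∑ r : R, if r ∈ N.jammed x then N.lam r else 0)
      = ∑ r : R, ((if r ∈ N.face x then mmCost (D r) (N.lam r) (N.srv x r) else 0)
        + (if r ∈ N.jammed x then N.lam r else 0)) := by
    rw [Finset.sum_add_distrib]
  -- second conjunct
  have hsecond : (∑ r : R, if r ∈ N.face x then mmCost (D r) (N.lam r) (N.srv x r) else 0)
        + (∑ r : R, if r ∈ N.jammed x then N.lam r else 0) = N.locRate x D := by
    rw [hsplit, StarNetwork.locRate]
    apply Finset.sum_congr rfl
    intro r _
    by_cases hF : r ∈ N.face x
    · rw [if_pos hF, if_neg (hFJ r hF), if_pos (Set.mem_union_left _ hF), add_zero]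
    · by_cases hJ : r ∈ N.jammed x
      · obtain ⟨hD0, hs0⟩ := hjam r hJ
        rw [if_neg hF, if_pos hJ, if_pos (Set.mem_union_right _ hJ), hD0, hs0,
          mmCost_zero, zero_add]
      · rw [if_neg hF, if_neg hJ, if_neg (by simp [hF, hJ]), add_zero]
  refine ⟨?_, hsecond⟩
  -- the minimizing family
  set astar : R → ℝ := fun r =>
    if r ∈ N.face x then (D r + Real.sqrt ((D r) ^ 2 + 4 * N.lam r * N.srv x r)) / 2
    else 0 with hastar
  have hmem : ((∑ r : R, if r ∈ N.face x then mmCost (D r) (N.lam r) (N.srv x r) else 0)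
        + (∑ r : R, if r ∈ N.jammed x then N.lam r else 0)) ∈
      {v : ℝ | ∃ a : R → ℝ,
        (∀ r ∈ N.jammed x, a r = 0) ∧
        (∀ r ∈ N.face x, 0 < a r ∧ 0 < a r - D r) ∧
        v = ∑ r : R, if r ∈ N.face x ∪ N.jammed x then
            poissonEntropy (a r) (N.lam r) + poissonEntropy (a r - D r) (N.srv x r)
          else 0} := by
    refine ⟨astar, fun r hJ => by simp [hastar, hJF r hJ], ?_, ?_⟩
    · intro r hF
      obtain ⟨h1, h2, _⟩ := poisson_eq_mmCost (D := D r) (N.lam_pos r) (srv_pos N x hx hF)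
      simp only [hastar, if_pos hF]
      exact ⟨h1, h2⟩
    · rw [hsplit]
      apply Finset.sum_congr rfl
      intro r _
      by_cases hF : r ∈ N.face x
      · obtain ⟨_, _, heq⟩ := poisson_eq_mmCost (D := D r) (N.lam_pos r) (srv_pos N x hx hF)
        rw [if_pos hF, if_neg (hFJ r hF), if_pos (Set.mem_union_left _ hF)]
        simp only [hastar, if_pos hF]
        rw [heq, add_zero]
      · by_cases hJ : r ∈ N.jammed x
        · obtain ⟨hD0, hs0⟩ := hjam r hJ
          rw [if_neg hF, if_pos hJ, if_pos (Set.mem_union_right _ hJ)]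
          simp only [hastar, if_neg hF]
          rw [hD0, hs0, zero_add, poissonEntropy, poissonEntropy]
          simp
        · rw [if_neg hF, if_neg hJ, if_neg (by simp [hF, hJ]), add_zero]
  have hlb : ∀ v ∈ {v : ℝ | ∃ a : R → ℝ,
        (∀ r ∈ N.jammed x, a r = 0) ∧
        (∀ r ∈ N.face x, 0 < a r ∧ 0 < a r - D r) ∧
        v = ∑ r : R, if r ∈ N.face x ∪ N.jammed x then
            poissonEntropy (a r) (N.lam r) + poissonEntropy (a r - D r) (N.srv x r)
          else 0},
      (∑ r : R, if r ∈ N.face x then mmCost (D r) (N.lam r) (N.srv x r) else 0)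
        + (∑ r : R, if r ∈ N.jammed x then N.lam r else 0) ≤ v := by
    rintro v ⟨a, haJ, haF, rfl⟩
    rw [hsplit]
    apply Finset.sum_le_sum
    intro r _
    by_cases hF : r ∈ N.face x
    · rw [if_pos hF, if_neg (hFJ r hF), if_pos (Set.mem_union_left _ hF), add_zero]
      exact poisson_ge_mmCost (N.lam_pos r) (srv_pos N x hx hF) (haF r hF).1 (haF r hF).2
    · by_cases hJ : r ∈ N.jammed x
      · obtain ⟨hD0, hs0⟩ := hjam r hJ
        rw [if_neg hF, if_pos hJ, if_pos (Set.mem_union_right _ hJ), haJ r hJ, hD0, hs0,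
          zero_add, poissonEntropy, poissonEntropy]
        simp
      · rw [if_neg hF, if_neg hJ, if_neg (by simp [hF, hJ]), add_zero]
  exact le_antisymm (csInf_le ⟨_, hlb⟩ hmem) (le_csInf ⟨_, hmem⟩ hlb)
end
end
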